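/- The map sending (p1, p0) ∈ (0,1)^2 to (p1 − p0, p0·p1/((1 − p0)·(1 − p1))) is a bijection from (0,1)^2 onto (−1,1) × (0,∞). -/

import Mathlib

/-!
The odds product is `odds p₀ * odds p₁`, where `odds p = p / (1 - p)` is strictly increasing
on `(0, 1)`. Fixing the risk difference `d` leaves a one-parameter family
`(p₁, p₀) = (t, t - d)` along which the odds product `odds (t - d) * odds t` is strictly
increasing, which gives injectivity. For surjectivity, clearing denominators turns
`odds (t - d) * odds t = o` into a polynomial equation in `t`; the polynomial changes sign
between the endpoints of the admissible interval of `t`, since there the numerator,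
respectively the denominator, of the odds product vanishes.
-/

open Set

noncomputable def odds (p : ℝ) : ℝ := p / (1 - p)

lemma odds_pos {p : ℝ} (hp : p ∈ Ioo 0 1) : 0 < odds p :=
  div_pos hp.1 (sub_pos.2 hp.2)

lemma odds_strictMonoOn : StrictMonoOn odds (Iio 1) := by
  intro p hp q hq hpq
  rw [odds, odds, div_lt_div_iff₀ (sub_pos.2 hp) (sub_pos.2 hq)]
  nlinarith

lemma strictMonoOn_odds_sub_mul_odds (d : ℝ) :
    StrictMonoOn (fun t => odds (t - d) * odds t) {t | t - d ∈ Ioo 0 1 ∧ t ∈ Ioo 0 1} := by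
  rintro s ⟨hsd, hs⟩ t ⟨htd, ht⟩ hst
  exact mul_lt_mul'' (odds_strictMonoOn hsd.2 htd.2 (by linarith))
    (odds_strictMonoOn hs.2 ht.2 hst) (odds_pos hsd).le (odds_pos hs).le

lemma exists_odds_sub_mul_odds_eq {d o : ℝ} (hd : d ∈ Ioo (-1) 1) (ho : 0 < o) :
    ∃ t, t - d ∈ Ioo 0 1 ∧ t ∈ Ioo 0 1 ∧ odds (t - d) * odds t = o := by
  obtain ⟨hd₁, hd₂⟩ := hd
  set a := max 0 d
  set b := min 1 (1 + d)
  have hab : a < b := max_lt (lt_min one_pos (by linarith)) (lt_min hd₂ (by linarith))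
  have h0a : 0 ≤ a := le_max_left 0 d
  have hda : d ≤ a := le_max_right 0 d
  have hb1 : b ≤ 1 := min_le_left 1 (1 + d)
  have hbd : b ≤ 1 + d := min_le_right 1 (1 + d)
  set F : ℝ → ℝ := fun t => (t - d) * t - o * ((1 - (t - d)) * (1 - t))
  have hFa : F a < 0 := by
    have hnum : (a - d) * a = 0 := by
      rcases max_cases 0 d with ⟨ha, -⟩ | ⟨ha, -⟩ <;> simp [a, ha]
    have hden : 0 < (1 - (a - d)) * (1 - a) := mul_pos (by linarith) (by linarith)
    simp only [F, hnum]
    nlinarith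
  have hFb : 0 < F b := by
    have hden : (1 - (b - d)) * (1 - b) = 0 := by
      rcases min_cases 1 (1 + d) with ⟨hb, -⟩ | ⟨hb, -⟩ <;> simp [b, hb]
    have hnum : 0 < (b - d) * b := mul_pos (by linarith) (by linarith)
    simpa only [F, hden, mul_zero, sub_zero] using hnum
  obtain ⟨t, ⟨hat, htb⟩, hFt⟩ :=
    intermediate_value_Ioo hab.le (by fun_prop : Continuous F).continuousOn ⟨hFa, hFb⟩
  have htd : t - d ∈ Ioo 0 1 := ⟨by linarith, by linarith⟩
  have ht : t ∈ Ioo 0 1 := ⟨by linarith, by linarith⟩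
  refine ⟨t, htd, ht, ?_⟩
  have hden : (1 - (t - d)) * (1 - t) ≠ 0 :=
    mul_ne_zero (sub_pos.2 htd.2).ne' (sub_pos.2 ht.2).ne'
  rw [odds, odds, div_mul_div_comm, div_eq_iff hden]
  linarith [show F t = 0 from hFt]

/-- The map `(p1, p0) ↦ (p1 - p0, p0·p1 / ((1-p0)·(1-p1)))` is a bijection
from `(0,1)²` onto `(-1,1) × (0,∞)`. -/
theorem stmt_10 :
    Set.BijOn
      (fun q : ℝ × ℝ => ((q.1 - q.2, q.2 * q.1 / ((1 - q.2) * (1 - q.1))) : ℝ × ℝ))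
      (Set.Ioo (0 : ℝ) 1 ×ˢ Set.Ioo (0 : ℝ) 1)
      (Set.Ioo (-1 : ℝ) 1 ×ˢ Set.Ioi (0 : ℝ)) := by
  have hf : (fun q : ℝ × ℝ => ((q.1 - q.2, q.2 * q.1 / ((1 - q.2) * (1 - q.1))) : ℝ × ℝ)) =
      fun q => (q.1 - q.2, odds q.2 * odds q.1) := by
    funext q
    rw [odds, odds, div_mul_div_comm]
  rw [hf]
  refine ⟨?_, ?_, ?_⟩
  · rintro ⟨p₁, p₀⟩ ⟨hp₁, hp₀⟩
    exact ⟨⟨by linarith [hp₁.1, hp₀.2], by linarith [hp₁.2, hp₀.1]⟩,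
      mul_pos (odds_pos hp₀) (odds_pos hp₁)⟩
  · rintro ⟨p₁, p₀⟩ ⟨hp₁, hp₀⟩ ⟨q₁, q₀⟩ ⟨hq₁, hq₀⟩ heq
    obtain ⟨hd, hop⟩ : p₁ - p₀ = q₁ - q₀ ∧ odds p₀ * odds p₁ = odds q₀ * odds q₁ :=
      Prod.mk.inj heq
    have h₁ : p₁ = q₁ := by
      refine (strictMonoOn_odds_sub_mul_odds (p₁ - p₀)).injOn (x₁ := p₁) (x₂ := q₁)
        ⟨by rwa [sub_sub_cancel], hp₁⟩ ⟨by rwa [hd, sub_sub_cancel], hq₁⟩ ?_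
      rwa [sub_sub_cancel, hd, sub_sub_cancel]
    exact Prod.ext h₁ (by linarith)
  · rintro ⟨d, o⟩ ⟨hd, ho⟩
    obtain ⟨t, htd, ht, hto⟩ := exists_odds_sub_mul_odds_eq hd ho
    exact ⟨(t, t - d), ⟨ht, htd⟩, Prod.ext (sub_sub_cancel t d) hto⟩
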